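/- arXiv:2205.09715 — 2 statements merged into one kernel-verified Lean document; each statement's English description precedes it below -/
import Mathlib

section
/- Let G be a directed graph with two edge-disjoint factors F and F0. For each vertex v, let s(v) and s0(v) be integers with s(v) ≤ d_F(v) and s0(v) ≤ d_{F0}(v), and let L(v) ⊆ {s(v), …, d_G(v) − s0(v)}. If for each vertex v, |L(v)| ≥ d⁺_G(v) + 1 + d⁻_F(v) + d⁻_{F0}(v) − s(v) − s0(v), then G has a factor H including F and excluding F0 such that d_H(v) ∈ L(v) for every vertex v. -/
open Finset

variable {V E : Type*}

/-- Degree of vertex `v` in the multigraph whose edge set is `S`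
(the ambient multigraph is given by the endpoint map `ends`); a loop counts twice. -/
def mdeg [DecidableEq V] (ends : E → V × V) (S : Finset E) (v : V) : ℕ :=
  ∑ e ∈ S, ((if (ends e).1 = v then 1 else 0) + (if (ends e).2 = v then 1 else 0))

/-- The multigraph with edge set `S` is connected: all vertices are mutually reachable. -/
def MConnected (ends : E → V × V) (S : Finset E) : Prop :=
  ∀ u v : V, Relation.ReflTransGen
    (fun a b => ∃ e ∈ S, ends e = (a, b) ∨ ends e = (b, a)) u v

/-- `T` is (the edge set of) a spanning tree: connected and with `|V| - 1` edges. -/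
def IsSpanningTree [Fintype V] (ends : E → V × V) (T : Finset E) : Prop :=
  MConnected ends T ∧ T.card + 1 = Fintype.card V

/-- `S` is `m`-tree-connected: it contains `m` pairwise edge-disjoint spanning trees. -/
def TreeConnected [Fintype V] (ends : E → V × V) (m : ℕ) (S : Finset E) : Prop :=
  ∃ T : Fin m → Finset E, (∀ i, T i ⊆ S ∧ IsSpanningTree ends (T i)) ∧
    ∀ i j, i ≠ j → Disjoint (T i) (T j)

/-- The edges of `S` crossing the cut `(A, Aᶜ)`. -/
def cutEdges [DecidableEq V] (ends : E → V × V) (S : Finset E) (A : Finset V) : Finset E :=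
  S.filter fun e => ¬(((ends e).1 ∈ A) ↔ ((ends e).2 ∈ A))

/-- `S` is `m`-edge-connected: every edge cut has at least `m` edges. -/
def EdgeConnected [Fintype V] [DecidableEq V] (ends : E → V × V) (m : ℕ) (S : Finset E) : Prop :=
  ∀ A : Finset V, A.Nonempty → A ≠ Finset.univ → m ≤ (cutEdges ends S A).card

/-- Tail of the edge `e` under the orientation `σ`. -/
def otail (ends : E → V × V) (σ : E → Bool) (e : E) : V :=
  if σ e then (ends e).1 else (ends e).2

/-- Head of the edge `e` under the orientation `σ`. -/
def ohead (ends : E → V × V) (σ : E → Bool) (e : E) : V :=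
  if σ e then (ends e).2 else (ends e).1

/-- Out-degree of `v` in the edge set `S` under the orientation `σ`. -/
def outDeg [DecidableEq V] (ends : E → V × V) (σ : E → Bool) (S : Finset E) (v : V) : ℕ :=
  (S.filter fun e => otail ends σ e = v).card

/-- In-degree of `v` in the edge set `S` under the orientation `σ`. -/
def inDeg [DecidableEq V] (ends : E → V × V) (σ : E → Bool) (S : Finset E) (v : V) : ℕ :=
  (S.filter fun e => ohead ends σ e = v).card

/-- Out-degree in a directed graph, where `ends` itself records the orientation
(first component = tail, second component = head). -/
def outDegD [DecidableEq V] (ends : E → V × V) (S : Finset E) (v : V) : ℕ :=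
  (S.filter fun e => (ends e).1 = v).card

/-- In-degree in a directed graph. -/
def inDegD [DecidableEq V] (ends : E → V × V) (S : Finset E) (v : V) : ℕ :=
  (S.filter fun e => (ends e).2 = v).card

/-- `S` is `(m, l)`-partition-connected: it decomposes into an `m`-tree-connected factor
and a factor admitting an orientation in which every vertex `v` has out-degree at least `l v`. -/
def PartitionConnected [Fintype V] [DecidableEq V] [DecidableEq E]
    (ends : E → V × V) (m : ℕ) (l : V → ℤ) (S : Finset E) : Prop :=
  ∃ S₁ ⊆ S, TreeConnected ends m S₁ ∧
    ∃ σ : E → Bool, ∀ v, l v ≤ (outDeg ends σ (S \ S₁) v : ℤ)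

/-- Number of edges of `S` with both ends in `A`. -/
def eIn [DecidableEq V] (ends : E → V × V) (S : Finset E) (A : Finset V) : ℕ :=
  (S.filter fun e => (ends e).1 ∈ A ∧ (ends e).2 ∈ A).card

/-- Number of edges of `S` with one end in `A` and the other end in `B`. -/
def eBetween [DecidableEq V] (ends : E → V × V) (S : Finset E) (A B : Finset V) : ℕ :=
  (S.filter fun e =>
    ((ends e).1 ∈ A ∧ (ends e).2 ∈ B) ∨ ((ends e).1 ∈ B ∧ (ends e).2 ∈ A)).card

/-- Every edge of `S` crosses the bipartition `(X, Xᶜ)`. -/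
def BipartiteWrt [DecidableEq V] (ends : E → V × V) (S : Finset E) (X : Finset V) : Prop :=
  ∀ e ∈ S, ¬(((ends e).1 ∈ X) ↔ ((ends e).2 ∈ X))

/-- The multigraph with edge set `S` is bipartite. -/
def IsBipartiteG [DecidableEq V] (ends : E → V × V) (S : Finset E) : Prop :=
  ∃ X : Finset V, BipartiteWrt ends S X

/-- Bipartite index: the smallest number of edges whose deletion from `S`
leaves a bipartite factor. -/
noncomputable def biIndex [DecidableEq V] [DecidableEq E]
    (ends : E → V × V) (S : Finset E) : ℕ :=
  sInf {n | ∃ H ⊆ S, IsBipartiteG ends H ∧ n = (S \ H).card}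

/-- `f : V → ZMod k` is compatible with the multigraph `S` with respect to the
bipartition `(X, Xᶜ)`. -/
def CompatibleWrt [Fintype V] [DecidableEq V] (ends : E → V × V) (S : Finset E)
    {k : ℕ} (f : V → ZMod k) (X : Finset V) : Prop :=
  (∃ x : ℕ, x ≤ eIn ends S X ∧
    (∑ v ∈ X, f v) - 2 * (x : ZMod k) = ∑ v ∈ Xᶜ, f v) ∨
  (∃ y : ℕ, y ≤ eIn ends S Xᶜ ∧
    (∑ v ∈ X, f v) = (∑ v ∈ Xᶜ, f v) - 2 * (y : ZMod k))

/-- `f : V → ZMod k` is compatible with `S`: compatible with respect to every bipartition. -/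
def Compatible [Fintype V] [DecidableEq V] (ends : E → V × V) (S : Finset E)
    {k : ℕ} (f : V → ZMod k) : Prop :=
  ∀ X : Finset V, CompatibleWrt ends S f X

section NS
variable {E J : Type*} [DecidableEq E] [DecidableEq J]

/-- Alternating sum over subsets of `R` of products of affine forms. -/
def Nsum (c : J → E → ℤ) (b : J → ℤ) (R : Finset E) (I : Finset J) : ℤ :=
  ∑ S ∈ R.powerset, (-1 : ℤ) ^ (R.card + S.card) * ∏ i ∈ I, (b i + ∑ e ∈ S, c i e)

lemma Nsum_empty (c : J → E → ℤ) (b : J → ℤ) : Nsum c b ∅ ∅ = 1 := by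
  simp [Nsum]

lemma Nsum_rec (c : J → E → ℤ) (b : J → ℤ) {R : Finset E} (I : Finset J) {e : E}
    (he : e ∈ R) :
    Nsum c b R I =
      ∑ T ∈ I.powerset.erase ∅, (∏ i ∈ T, c i e) * Nsum c b (R.erase e) (I \ T) := by
  have he' : e ∉ R.erase e := Finset.notMem_erase e R
  have hR : R = insert e (R.erase e) := (Finset.insert_erase he).symm
  have hcard : R.card = (R.erase e).card + 1 := by
    rw [hR, Finset.card_insert_of_notMem he', Finset.erase_insert he']
  conv_lhs => rw [Nsum, hR, Finset.sum_powerset_insert he']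
  rw [← hR, ← Finset.sum_add_distrib]
  have step : ∀ S ∈ (R.erase e).powerset,
      (-1 : ℤ) ^ (R.card + S.card) * ∏ i ∈ I, (b i + ∑ e' ∈ S, c i e')
      + (-1 : ℤ) ^ (R.card + (insert e S).card) * ∏ i ∈ I, (b i + ∑ e' ∈ insert e S, c i e')
      = ∑ T ∈ I.powerset.erase ∅,
          (∏ i ∈ T, c i e) *
            ((-1 : ℤ) ^ ((R.erase e).card + S.card) * ∏ i ∈ I \ T, (b i + ∑ e' ∈ S, c i e')) := by
    intro S hS
    have heS : e ∉ S := fun h => he' (Finset.mem_powerset.mp hS h)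
    have hSc : (insert e S).card = S.card + 1 := Finset.card_insert_of_notMem heS
    have hsum : ∀ i, b i + ∑ e' ∈ insert e S, c i e' = c i e + (b i + ∑ e' ∈ S, c i e') := by
      intro i; rw [Finset.sum_insert heS]; ring
    have hexp : ∏ i ∈ I, (b i + ∑ e' ∈ insert e S, c i e')
        = ∑ T ∈ I.powerset, (∏ i ∈ T, c i e) * ∏ i ∈ I \ T, (b i + ∑ e' ∈ S, c i e') := by
      rw [Finset.prod_congr rfl fun i _ => hsum i, Finset.prod_add]
    have hsplit : ∑ T ∈ I.powerset, (∏ i ∈ T, c i e) * ∏ i ∈ I \ T, (b i + ∑ e' ∈ S, c i e')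
        = (∏ i ∈ I, (b i + ∑ e' ∈ S, c i e'))
          + ∑ T ∈ I.powerset.erase ∅,
              (∏ i ∈ T, c i e) * ∏ i ∈ I \ T, (b i + ∑ e' ∈ S, c i e') := by
      rw [← Finset.add_sum_erase _ _ (Finset.empty_mem_powerset I)]
      simp
    have hsgn : (-1 : ℤ) ^ (R.card + (insert e S).card) = (-1 : ℤ) ^ ((R.erase e).card + S.card) := by
      rw [hcard, hSc]; ring
    have hsgn2 : (-1 : ℤ) ^ (R.card + S.card) = -(-1 : ℤ) ^ ((R.erase e).card + S.card) := by
      rw [hcard]; ring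
    rw [hexp, hsplit, hsgn, hsgn2, mul_add, Finset.mul_sum, neg_mul, neg_add_cancel_left]
    exact Finset.sum_congr rfl fun T _ => by ring
  rw [Finset.sum_congr rfl step, Finset.sum_comm]
  refine Finset.sum_congr rfl fun T _ => ?_
  rw [Nsum, Finset.mul_sum]

end NS

section NS2
variable {E J : Type*} [DecidableEq E] [DecidableEq J]

lemma Nsum_eq_zero (c : J → E → ℤ) (b : J → ℤ) :
    ∀ (n : ℕ) (R : Finset E) (I : Finset J), R.card = n → I.card < R.card →
      Nsum c b R I = 0 := by
  intro n
  induction n with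
  | zero => intro R I hR hI; omega
  | succ n ih =>
    intro R I hR hI
    obtain ⟨e, he⟩ : R.Nonempty := Finset.card_pos.mp (by omega)
    rw [Nsum_rec c b I he]
    refine Finset.sum_eq_zero fun T hT => ?_
    obtain ⟨hTne, hTp⟩ := Finset.mem_erase.mp hT
    have hTsub : T ⊆ I := Finset.mem_powerset.mp hTp
    have hT1 : 1 ≤ T.card := Finset.card_pos.mpr (Finset.nonempty_iff_ne_empty.mpr hTne)
    have hTle : T.card ≤ I.card := Finset.card_le_card hTsub
    have h1 : (R.erase e).card = n := by rw [Finset.card_erase_of_mem he]; omega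
    have h2 : (I \ T).card < (R.erase e).card := by
      rw [Finset.card_sdiff_of_subset hTsub, h1]; omega
    rw [ih _ _ h1 h2, mul_zero]

lemma Nsum_nonneg (c : J → E → ℤ) (b : J → ℤ) (hc : ∀ i e, 0 ≤ c i e) :
    ∀ (n : ℕ) (R : Finset E) (I : Finset J), R.card = n → I.card = R.card →
      0 ≤ Nsum c b R I := by
  intro n
  induction n with
  | zero =>
    intro R I hR hI
    have hR0 : R = ∅ := Finset.card_eq_zero.mp hR
    have hI0 : I = ∅ := Finset.card_eq_zero.mp (by omega)
    rw [hR0, hI0, Nsum_empty]; norm_num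
  | succ n ih =>
    intro R I hR hI
    obtain ⟨e, he⟩ : R.Nonempty := Finset.card_pos.mp (by omega)
    rw [Nsum_rec c b I he]
    refine Finset.sum_nonneg fun T hT => ?_
    obtain ⟨hTne, hTp⟩ := Finset.mem_erase.mp hT
    have hTsub : T ⊆ I := Finset.mem_powerset.mp hTp
    have hT1 : 1 ≤ T.card := Finset.card_pos.mpr (Finset.nonempty_iff_ne_empty.mpr hTne)
    have hTle : T.card ≤ I.card := Finset.card_le_card hTsub
    have h1 : (R.erase e).card = n := by rw [Finset.card_erase_of_mem he]; omega
    have h2 : (I \ T).card = I.card - T.card := Finset.card_sdiff_of_subset hTsub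
    refine mul_nonneg (Finset.prod_nonneg fun i _ => hc i e) ?_
    rcases eq_or_lt_of_le (show (I \ T).card ≤ (R.erase e).card by omega) with h | h
    · exact ih _ _ h1 (by omega)
    · rw [Nsum_eq_zero c b n _ _ h1 h]

lemma Nsum_pos (c : E → E → ℤ) (b : E → ℤ) (hc : ∀ i e, 0 ≤ c i e)
    (hdiag : ∀ e, 1 ≤ c e e) :
    ∀ (n : ℕ) (R : Finset E), R.card = n → 1 ≤ Nsum c b R R := by
  intro n
  induction n with
  | zero =>
    intro R hR
    rw [Finset.card_eq_zero.mp hR, Nsum_empty]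
  | succ n ih =>
    intro R hR
    obtain ⟨e, he⟩ : R.Nonempty := Finset.card_pos.mp (by omega)
    rw [Nsum_rec c b R he]
    have h1 : (R.erase e).card = n := by rw [Finset.card_erase_of_mem he]; omega
    have hmem : ({e} : Finset E) ∈ R.powerset.erase ∅ := by
      rw [Finset.mem_erase, Finset.mem_powerset]
      exact ⟨Finset.singleton_ne_empty e, Finset.singleton_subset_iff.mpr he⟩
    have hterm : (1 : ℤ) ≤ (∏ i ∈ ({e} : Finset E), c i e) * Nsum c b (R.erase e) (R \ {e}) := by
      rw [Finset.prod_singleton, Finset.sdiff_singleton_eq_erase]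
      have := ih (R.erase e) h1
      nlinarith [hdiag e]
    have hnn : ∀ T ∈ R.powerset.erase ∅,
        0 ≤ (∏ i ∈ T, c i e) * Nsum c b (R.erase e) (R \ T) := by
      intro T hT
      obtain ⟨hTne, hTp⟩ := Finset.mem_erase.mp hT
      have hTsub : T ⊆ R := Finset.mem_powerset.mp hTp
      have hT1 : 1 ≤ T.card := Finset.card_pos.mpr (Finset.nonempty_iff_ne_empty.mpr hTne)
      have hTle : T.card ≤ R.card := Finset.card_le_card hTsub
      have h2 : (R \ T).card = R.card - T.card := Finset.card_sdiff_of_subset hTsub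
      refine mul_nonneg (Finset.prod_nonneg fun i _ => hc i e) ?_
      rcases eq_or_lt_of_le (show (R \ T).card ≤ (R.erase e).card by omega) with h | h
      · exact Nsum_nonneg c b hc n _ _ h1 (by omega)
      · rw [Nsum_eq_zero c b n _ _ h1 h]
    exact le_trans hterm (Finset.single_le_sum hnn hmem)

end NS2

section Helpers
variable {V E : Type*} [DecidableEq V] [DecidableEq E]

lemma mdeg_union (ends : E → V × V) {A B : Finset E} (h : Disjoint A B) (v : V) :
    mdeg ends (A ∪ B) v = mdeg ends A v + mdeg ends B v := Finset.sum_union h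

lemma mdeg_mono (ends : E → V × V) {S R : Finset E} (h : S ⊆ R) (v : V) :
    mdeg ends S v ≤ mdeg ends R v := Finset.sum_le_sum_of_subset h

lemma mdeg_eq_out_add_in (ends : E → V × V) (S : Finset E) (v : V) :
    mdeg ends S v = outDegD ends S v + inDegD ends S v := by
  rw [mdeg, outDegD, inDegD, Finset.card_filter, Finset.card_filter,
    ← Finset.sum_add_distrib]

lemma outDegD_union (ends : E → V × V) {A B : Finset E} (h : Disjoint A B) (v : V) :
    outDegD ends (A ∪ B) v = outDegD ends A v + outDegD ends B v := by
  rw [outDegD, outDegD, outDegD, Finset.filter_union,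
    Finset.card_union_of_disjoint (Finset.disjoint_filter_filter h)]

lemma exists_good_subset (ends : E → V × V) (R : Finset E) (K : V → Finset ℤ)
    (hK : ∀ v, K v ⊆ Finset.Icc 0 (mdeg ends R v : ℤ))
    (hKcard : ∀ v, outDegD ends R v + 1 ≤ (K v).card) :
    ∃ S ⊆ R, ∀ v, (mdeg ends S v : ℤ) ∈ K v := by
  classical
  set bad : V → Finset ℤ := fun v => Finset.Icc (0:ℤ) (mdeg ends R v : ℤ) \ K v with hbad
  set inE : V → Finset E := fun v => R.filter fun e => (ends e).2 = v with hinE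
  have hbadcard : ∀ v, (bad v).card ≤ (inE v).card := by
    intro v
    have h1 : (Finset.Icc (0:ℤ) (mdeg ends R v : ℤ)).card = mdeg ends R v + 1 := by
      rw [Int.card_Icc]
      omega
    have h2 : (bad v).card = (Finset.Icc (0:ℤ) (mdeg ends R v : ℤ)).card - (K v).card :=
      Finset.card_sdiff_of_subset (hK v)
    have h3 := Finset.card_le_card (hK v)
    have h4 := mdeg_eq_out_add_in ends R v
    have h5 : (inE v).card = inDegD ends R v := rfl
    have h6 := hKcard v
    omega
  have hgex : ∀ v, ∃ g : {x // x ∈ bad v} → {e // e ∈ inE v}, Function.Injective g := by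
    intro v
    refine ⟨(inE v).equivFin.symm ∘ (Fin.castLE (hbadcard v)) ∘ (bad v).equivFin, ?_⟩
    exact (inE v).equivFin.symm.injective.comp
      ((Fin.castLE_injective _).comp (bad v).equivFin.injective)
  choose g hg using hgex
  set k : E → ℤ := fun e =>
    if h : ∃ x : {x // x ∈ bad ((ends e).2)}, (g ((ends e).2) x : E) = e
    then h.choose.1 else 0 with hk
  have hcover : ∀ v, ∀ x ∈ bad v, ∃ e ∈ R, (ends e).2 = v ∧ k e = x := by
    intro v x hx
    obtain ⟨e, hef, hgeq⟩ : ∃ e, e ∈ inE v ∧ (g v ⟨x, hx⟩ : E) = e :=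
      ⟨_, (g v ⟨x, hx⟩).2, rfl⟩
    have heR : e ∈ R := (Finset.mem_filter.mp hef).1
    have hev : (ends e).2 = v := (Finset.mem_filter.mp hef).2
    refine ⟨e, heR, hev, ?_⟩
    subst hev
    have hex : ∃ x' : {y // y ∈ bad ((ends e).2)}, (g ((ends e).2) x' : E) = e := ⟨⟨x, hx⟩, hgeq⟩
    have h1 : k e = hex.choose.1 := by simp only [hk]; exact dif_pos hex
    have h2 : g ((ends e).2) hex.choose = g ((ends e).2) ⟨x, hx⟩ :=
      Subtype.ext (hex.choose_spec.trans hgeq.symm)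
    have h3 := hg _ h2
    rw [h1, h3]
  set c : E → E → ℤ := fun i e =>
    (if (ends e).1 = (ends i).2 then 1 else 0) + (if (ends e).2 = (ends i).2 then 1 else 0)
    with hc
  set b : E → ℤ := fun i => -(k i) with hb
  have hcnn : ∀ i e, 0 ≤ c i e := by
    intro i e; simp only [hc]; split_ifs <;> norm_num
  have hcdiag : ∀ e, 1 ≤ c e e := by
    intro e; simp only [hc, if_pos rfl]; split_ifs <;> norm_num
  have hval : ∀ (S : Finset E) (i : E),
      b i + ∑ e ∈ S, c i e = (mdeg ends S ((ends i).2) : ℤ) - k i := by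
    intro S i
    simp only [hb, hc, mdeg, Nat.cast_sum, Nat.cast_add, Nat.cast_ite, Nat.cast_one,
      Nat.cast_zero]
    ring
  have hpos : 1 ≤ Nsum c b R R := Nsum_pos c b hcnn hcdiag R.card R rfl
  have hne : Nsum c b R R ≠ 0 := by omega
  obtain ⟨S, hSmem, hSne⟩ := Finset.exists_ne_zero_of_sum_ne_zero hne
  have hSR : S ⊆ R := Finset.mem_powerset.mp hSmem
  refine ⟨S, hSR, fun v => ?_⟩
  by_contra hnot
  have hmono := mdeg_mono ends hSR v
  have hbadmem : (mdeg ends S v : ℤ) ∈ bad v := by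
    simp only [hbad, Finset.mem_sdiff, Finset.mem_Icc]
    exact ⟨⟨by positivity, by exact_mod_cast hmono⟩, hnot⟩
  obtain ⟨e, heR, hev, hke⟩ := hcover v _ hbadmem
  have hzero : ∏ i ∈ R, (b i + ∑ e' ∈ S, c i e') = 0 :=
    Finset.prod_eq_zero heR (by rw [hval, hev, hke]; ring)
  exact hSne (by rw [hzero, mul_zero])

end Helpers

/-- List factors in directed graphs including `F` and excluding `F₀`. -/
theorem statement_5 [Fintype V] [DecidableEq V] [Fintype E] [DecidableEq E]
    (ends : E → V × V) (F F₀ : Finset E) (hFF₀ : Disjoint F F₀)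
    (s s₀ : V → ℤ)
    (hs : ∀ v, s v ≤ (mdeg ends F v : ℤ))
    (hs₀ : ∀ v, s₀ v ≤ (mdeg ends F₀ v : ℤ))
    (L : V → Finset ℤ)
    (hL : ∀ v, L v ⊆ Finset.Icc (s v) ((mdeg ends (Finset.univ : Finset E) v : ℤ) - s₀ v))
    (hcard : ∀ v, (outDegD ends (Finset.univ : Finset E) v : ℤ) + 1
        + (inDegD ends F v : ℤ) + (inDegD ends F₀ v : ℤ) - s v - s₀ v ≤ ((L v).card : ℤ)) :
    ∃ H : Finset E, F ⊆ H ∧ Disjoint H F₀ ∧ ∀ v, (mdeg ends H v : ℤ) ∈ L v := by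
  classical
  set R : Finset E := Finset.univ \ (F ∪ F₀) with hR
  have hdisj : Disjoint R (F ∪ F₀) := Finset.sdiff_disjoint
  have hRF : Disjoint F R := (hdisj.mono_right Finset.subset_union_left).symm
  have hRF₀ : Disjoint F₀ R := (hdisj.mono_right Finset.subset_union_right).symm
  have hpart : (F ∪ F₀) ∪ R = Finset.univ := by
    rw [hR, Finset.union_sdiff_of_subset (Finset.subset_univ _)]
  have hmdeg_univ : ∀ v, mdeg ends (Finset.univ : Finset E) v
      = mdeg ends F v + mdeg ends F₀ v + mdeg ends R v := by
    intro v
    rw [← hpart, mdeg_union ends (hdisj.symm), mdeg_union ends hFF₀]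
  have hout_univ : ∀ v, outDegD ends (Finset.univ : Finset E) v
      = outDegD ends F v + outDegD ends F₀ v + outDegD ends R v := by
    intro v
    rw [← hpart, outDegD_union ends (hdisj.symm), outDegD_union ends hFF₀]
  set K : V → Finset ℤ := fun v =>
    ((L v).filter fun t => (mdeg ends F v : ℤ) ≤ t ∧
        t ≤ (mdeg ends F v : ℤ) + (mdeg ends R v : ℤ)).image
      (fun t => t - (mdeg ends F v : ℤ)) with hKdef
  have hK : ∀ v, K v ⊆ Finset.Icc 0 (mdeg ends R v : ℤ) := by
    intro v x hx
    simp only [hKdef, Finset.mem_image, Finset.mem_filter] at hx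
    obtain ⟨t, ⟨_, h1, h2⟩, rfl⟩ := hx
    rw [Finset.mem_Icc]
    omega
  have hKcard : ∀ v, outDegD ends R v + 1 ≤ (K v).card := by
    intro v
    have hKc : (K v).card = ((L v).filter fun t => (mdeg ends F v : ℤ) ≤ t ∧
        t ≤ (mdeg ends F v : ℤ) + (mdeg ends R v : ℤ)).card := by
      refine Finset.card_image_of_injOn ?_
      intro a _ b _ hab
      simp only at hab
      omega
    set A1 : Finset ℤ := (L v).filter (fun t => t < (mdeg ends F v : ℤ)) with hA1def
    set A2 : Finset ℤ := (L v).filter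
      (fun t => (mdeg ends F v : ℤ) + (mdeg ends R v : ℤ) < t) with hA2def
    have hsub : L v ⊆ ((L v).filter fun t => (mdeg ends F v : ℤ) ≤ t ∧
        t ≤ (mdeg ends F v : ℤ) + (mdeg ends R v : ℤ)) ∪ (A1 ∪ A2) := by
      intro t ht
      simp only [Finset.mem_union, hA1def, hA2def, Finset.mem_filter]
      by_cases h1 : (mdeg ends F v : ℤ) ≤ t ∧ t ≤ (mdeg ends F v : ℤ) + (mdeg ends R v : ℤ)
      · exact Or.inl ⟨ht, h1⟩
      · refine Or.inr ?_
        rcases not_and_or.mp h1 with h | h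
        · exact Or.inl ⟨ht, by omega⟩
        · exact Or.inr ⟨ht, by omega⟩
    have hLle : (L v).card ≤ ((L v).filter fun t => (mdeg ends F v : ℤ) ≤ t ∧
        t ≤ (mdeg ends F v : ℤ) + (mdeg ends R v : ℤ)).card + ((A1 ∪ A2).card) :=
      le_trans (Finset.card_le_card hsub) (Finset.card_union_le _ _)
    have hA12 : (A1 ∪ A2).card ≤ A1.card + A2.card := Finset.card_union_le _ _
    have hA1le : (A1.card : ℤ) ≤ (mdeg ends F v : ℤ) - s v := by
      have hsubA : A1 ⊆ Finset.Icc (s v) ((mdeg ends F v : ℤ) - 1) := by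
        intro t ht
        simp only [hA1def, Finset.mem_filter] at ht
        have := Finset.mem_Icc.mp (hL v ht.1)
        rw [Finset.mem_Icc]
        omega
      calc (A1.card : ℤ) ≤ ((Finset.Icc (s v) ((mdeg ends F v : ℤ) - 1)).card : ℤ) := by
            exact_mod_cast Finset.card_le_card hsubA
        _ ≤ (mdeg ends F v : ℤ) - s v := by
            have := hs v
            rw [Int.card_Icc]
            omega
    have hA2le : (A2.card : ℤ) ≤ (mdeg ends F₀ v : ℤ) - s₀ v := by
      have hsubA : A2 ⊆ Finset.Icc ((mdeg ends F v : ℤ) + (mdeg ends R v : ℤ) + 1)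
          ((mdeg ends (Finset.univ : Finset E) v : ℤ) - s₀ v) := by
        intro t ht
        simp only [hA2def, Finset.mem_filter] at ht
        have := Finset.mem_Icc.mp (hL v ht.1)
        rw [Finset.mem_Icc]
        omega
      have hmu := hmdeg_univ v
      calc (A2.card : ℤ)
          ≤ ((Finset.Icc ((mdeg ends F v : ℤ) + (mdeg ends R v : ℤ) + 1)
              ((mdeg ends (Finset.univ : Finset E) v : ℤ) - s₀ v)).card : ℤ) := by
            exact_mod_cast Finset.card_le_card hsubA
        _ ≤ (mdeg ends F₀ v : ℤ) - s₀ v := by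
            have := hs₀ v
            rw [Int.card_Icc]
            omega
    have hmF := mdeg_eq_out_add_in ends F v
    have hmF₀ := mdeg_eq_out_add_in ends F₀ v
    have hou := hout_univ v
    have hc := hcard v
    omega
  obtain ⟨S, hSR, hSK⟩ := exists_good_subset ends R K hK hKcard
  refine ⟨F ∪ S, Finset.subset_union_left, ?_, ?_⟩
  · exact Finset.disjoint_union_left.mpr ⟨hFF₀, (hRF₀.mono_right hSR).symm⟩
  · intro v
    have hmem := hSK v
    simp only [hKdef, Finset.mem_image, Finset.mem_filter] at hmem
    obtain ⟨t, ⟨htL, h1, h2⟩, h3⟩ := hmem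
    have hFS : Disjoint F S := hRF.mono_right hSR
    have : (mdeg ends (F ∪ S) v : ℤ) = t := by
      rw [mdeg_union ends hFS]
      push_cast
      omega
    rwa [this]
end

section
/- If G is an (m1+2m2)-tree-connected graph and m2 ≥ k0 ≥ 0, then G can be decomposed into two factors G1 and G2 such that G1 is m1-tree-connected, the induced bipartite factor G2[X,Y] is m2-tree-connected for some bipartition X, Y of V(G), and e_{G2}(X) + e_{G2}(Y) = min{k0, bi(G)}. -/
open Finset

variable {V E : Type*}

/-!
Let `X` be a maximum cut of `G`. The edges of `G` not crossing `X` form a set whose removal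
leaves a bipartite factor, so `t = min{k₀, bi(G)} ≤ m₂` of them can be put into a set `N`. It
suffices to find `m₁` spanning trees in `G - N` and `m₂` spanning trees in `G[X, Xᶜ]`, all
edge-disjoint: `G₂` is the union of the latter with `N`.

By Edmonds' matroid partition theorem for cycle matroids, proved with shortest augmenting paths
in the exchange graph of a packing of forests, such trees exist as soon as every edge set `A`
satisfies `m₁ (c(A - N) - 1) + m₂ (c(A ∩ G[X, Xᶜ]) - 1) ≤` the number of allowed edges
outside `A`, where `c` counts components. Each of the `m₁ + 2 m₂` edge-disjoint spanning trees
of `G` has at least `c(A') - 1` edges joining different components of `A'`, and, `X` being a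
maximum cut, at least half of all such edges cross `X`. If
`2 (c(A - N) - 1) ≤ c(A ∩ G[X, Xᶜ]) - 1`, the second count, applied to `A ∩ G[X, Xᶜ]`,
suffices; otherwise the first one, applied to `A - N`, leaves a slack of `m₂ ≥ t` that pays
for the edges of `N`.
-/

section Reach

variable (ends : E → V × V)

def EdgeAdj (S : Finset E) (a b : V) : Prop := ∃ e ∈ S, ends e = (a, b) ∨ ends e = (b, a)

def Reach (S : Finset E) : V → V → Prop := Relation.ReflTransGen (EdgeAdj ends S)

/-- `e` lies in the span of `S` in the cycle matroid. -/
def Spans (S : Finset E) (e : E) : Prop := Reach ends S (ends e).1 (ends e).2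

variable {ends} {S T : Finset E} {a b c u v : V} {e f : E}

theorem mconnected_iff_reach : MConnected ends S ↔ ∀ u v, Reach ends S u v := Iff.rfl

theorem Reach.refl (a : V) : Reach ends S a a := Relation.ReflTransGen.refl

theorem Reach.symm (h : Reach ends S a b) : Reach ends S b a := by
  have : Std.Symm (EdgeAdj ends S) := ⟨by rintro a b ⟨e, he, h | h⟩ <;> exact ⟨e, he, by tauto⟩⟩
  exact Relation.ReflTransGen.stdSymm.symm _ _ h

theorem Reach.trans (h : Reach ends S a b) (h' : Reach ends S b c) : Reach ends S a c :=
  Relation.ReflTransGen.trans h h'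

theorem spans_of_mem (he : e ∈ S) : Spans ends S e :=
  Relation.ReflTransGen.single ⟨e, he, Or.inl rfl⟩

theorem Reach.of_forall_spans (h : ∀ e ∈ S, Spans ends T e) (hab : Reach ends S a b) :
    Reach ends T a b := by
  induction hab with
  | refl => exact .refl _
  | tail _ hstep ih =>
    obtain ⟨e, he, h' | h'⟩ := hstep
    · exact ih.trans (by simpa [Spans, h'] using h e he)
    · exact ih.trans (by simpa [Spans, h'] using (h e he).symm)

theorem Reach.mono (hST : S ⊆ T) (h : Reach ends S a b) : Reach ends T a b :=
  h.of_forall_spans fun _ he => spans_of_mem (hST he)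

theorem reach_iff_of_forall_spans (hST : ∀ e ∈ S, Spans ends T e)
    (hTS : ∀ e ∈ T, Spans ends S e) : Reach ends S a b ↔ Reach ends T a b :=
  ⟨.of_forall_spans hST, .of_forall_spans hTS⟩

theorem reach_insert_iff [DecidableEq E] :
    Reach ends (insert e S) a b ↔ Reach ends S a b ∨
      (Reach ends S a (ends e).1 ∧ Reach ends S (ends e).2 b) ∨
      (Reach ends S a (ends e).2 ∧ Reach ends S (ends e).1 b) := by
  constructor
  · intro h
    induction h with
    | refl => exact Or.inl (.refl _)
    | @tail x y _ hstep ih =>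
      obtain ⟨f, hf, hxy⟩ := hstep
      rcases Finset.mem_insert.mp hf with rfl | hfS
      · rcases hxy with h' | h' <;> rw [h'] <;> rw [h'] at ih <;>
          rcases ih with h1 | ⟨h1, -⟩ | ⟨h1, -⟩ <;> simp_all [Reach.refl]
      · have hstep : Reach ends S x y := Relation.ReflTransGen.single ⟨f, hfS, hxy⟩
        rcases ih with h1 | ⟨h1, h2⟩ | ⟨h1, h2⟩
        · exact Or.inl (h1.trans hstep)
        · exact Or.inr (Or.inl ⟨h1, h2.trans hstep⟩)
        · exact Or.inr (Or.inr ⟨h1, h2.trans hstep⟩)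
  · have hsub : ∀ {x y}, Reach ends S x y → Reach ends (insert e S) x y :=
      .mono (Finset.subset_insert _ _)
    have he : Spans ends (insert e S) e := spans_of_mem (Finset.mem_insert_self _ _)
    rintro (h | ⟨h1, h2⟩ | ⟨h1, h2⟩)
    · exact hsub h
    · exact (hsub h1).trans (he.trans (hsub h2))
    · exact (hsub h1).trans (he.symm.trans (hsub h2))

theorem spans_of_reach_insert [DecidableEq E] (hST : S ⊆ T) (hS : ¬ Reach ends S u v)
    (he : Reach ends (insert e S) u v) (hT : Reach ends T u v) : Spans ends T e := by
  rcases reach_insert_iff.mp he with h | ⟨h1, h2⟩ | ⟨h1, h2⟩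
  · exact absurd h hS
  · exact (h1.mono hST).symm.trans (hT.trans (h2.mono hST).symm)
  · exact (h2.mono hST).trans (hT.symm.trans (h1.mono hST))

end Reach

section Components

open scoped Classical

variable (ends : E → V × V)

def reachSetoid (S : Finset E) : Setoid V :=
  ⟨Reach ends S, ⟨Reach.refl, Reach.symm, Reach.trans⟩⟩

noncomputable def numComponents (S : Finset E) : ℕ := Nat.card (Quotient (reachSetoid ends S))

variable {ends} {S T : Finset E} {e : E}

def componentMap (h : ∀ a b, Reach ends S a b → Reach ends T a b) :
    Quotient (reachSetoid ends S) → Quotient (reachSetoid ends T) :=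
  Quotient.map id h

theorem componentMap_surjective (h : ∀ a b, Reach ends S a b → Reach ends T a b) :
    Function.Surjective (componentMap h) :=
  Quotient.map_surjective _ Function.surjective_id

theorem numComponents_le_of_reach [Finite V] (h : ∀ a b, Reach ends S a b → Reach ends T a b) :
    numComponents ends T ≤ numComponents ends S :=
  Nat.card_le_card_of_surjective _ (componentMap_surjective h)

theorem numComponents_congr [Finite V] (h : ∀ a b, Reach ends S a b ↔ Reach ends T a b) :
    numComponents ends S = numComponents ends T :=
  le_antisymm (numComponents_le_of_reach fun a b => (h a b).2)
    (numComponents_le_of_reach fun a b => (h a b).1)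

theorem numComponents_lt_of_reach [Finite V] (h : ∀ a b, Reach ends S a b → Reach ends T a b)
    {u v : V} (huv : Reach ends T u v) (hnuv : ¬ Reach ends S u v) :
    numComponents ends T < numComponents ends S := by
  refine (numComponents_le_of_reach h).lt_of_not_ge fun hle => hnuv ?_
  have hinj := ((componentMap_surjective h).bijective_of_nat_card_le hle).1
  exact Quotient.exact (hinj (Quotient.sound huv : componentMap h ⟦u⟧ = componentMap h ⟦v⟧))

theorem numComponents_pos [Finite V] [Nonempty V] (S : Finset E) : 0 < numComponents ends S :=
  have : Nonempty (Quotient (reachSetoid ends S)) := ⟨⟦Classical.arbitrary V⟧⟩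
  Nat.card_pos

theorem numComponents_empty [Fintype V] : numComponents ends (∅ : Finset E) = Fintype.card V := by
  have hbij : Function.Bijective (Quotient.mk (reachSetoid ends ∅)) := by
    refine ⟨fun a b hab => ?_, Quotient.mk_surjective⟩
    induction (Quotient.exact hab : Reach ends ∅ a b) with
    | refl => rfl
    | tail _ hstep => obtain ⟨e, he, -⟩ := hstep; exact absurd he (Finset.notMem_empty e)
  rw [numComponents, ← Nat.card_eq_fintype_card, Nat.card_eq_of_bijective _ hbij]

theorem mconnected_iff_numComponents_eq_one [Nonempty V] :
    MConnected ends S ↔ numComponents ends S = 1 := by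
  rw [mconnected_iff_reach, numComponents, Nat.card_eq_one_iff_unique]
  refine ⟨fun h => ⟨⟨?_⟩, ⟨⟦Classical.arbitrary V⟧⟩⟩,
    fun ⟨h, _⟩ u v => Quotient.exact (h.elim ⟦u⟧ ⟦v⟧)⟩
  rintro ⟨u⟩ ⟨v⟩
  exact Quotient.sound (h u v)

variable [DecidableEq E]

/-- The components other than that of the second endpoint inject into the new ones. -/
theorem numComponents_le_insert [Finite V] (S : Finset E) (e : E) :
    numComponents ends S ≤ numComponents ends (insert e S) + 1 := by
  have := Fintype.ofFinite (Quotient (reachSetoid ends S))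
  have := Fintype.ofFinite (Quotient (reachSetoid ends (insert e S)))
  let f := componentMap (ends := ends) (S := S) (T := insert e S)
    fun _ _ => .mono (Finset.subset_insert _ _)
  have hinj :
      Set.InjOn f ↑(Finset.univ.erase (⟦(ends e).2⟧ : Quotient (reachSetoid ends S))) := by
    intro qa ha qb hb hfab
    induction qa using Quotient.inductionOn
    induction qb using Quotient.inductionOn
    rw [Finset.mem_coe, Finset.mem_erase] at ha hb
    rcases reach_insert_iff.mp (Quotient.exact hfab) with h | ⟨-, h⟩ | ⟨h, -⟩
    · exact Quotient.sound h
    · exact absurd (Quotient.sound h).symm hb.1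
    · exact absurd (Quotient.sound h) ha.1
  have hcard := Finset.card_le_card_of_injOn f (fun x _ => Finset.mem_univ (f x)) hinj
  rw [Finset.card_erase_of_mem (Finset.mem_univ _), Finset.card_univ, Finset.card_univ] at hcard
  rw [numComponents, numComponents, Nat.card_eq_fintype_card, Nat.card_eq_fintype_card]
  omega

theorem numComponents_insert_of_spans [Finite V] (h : Spans ends S e) :
    numComponents ends (insert e S) = numComponents ends S := by
  refine numComponents_congr fun a b => ⟨fun hab => ?_, .mono (Finset.subset_insert _ _)⟩
  exact hab.of_forall_spans fun f hf => by
    rcases Finset.mem_insert.mp hf with rfl | hf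
    exacts [h, spans_of_mem hf]

theorem numComponents_insert_of_not_spans [Finite V] (h : ¬ Spans ends S e) :
    numComponents ends (insert e S) + 1 = numComponents ends S := by
  have h1 := numComponents_le_insert (ends := ends) S e
  have h2 := numComponents_lt_of_reach (fun a b => Reach.mono (Finset.subset_insert e S))
    (spans_of_mem (Finset.mem_insert_self e S)) h
  omega

theorem numComponents_le_union_add_card_filter [Finite V] (A D : Finset E) :
    numComponents ends A ≤
      numComponents ends (A ∪ D) + (D.filter fun e => ¬ Spans ends A e).card := by
  induction D using Finset.induction_on with
  | empty => simp
  | @insert e D he ih =>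
    rw [Finset.union_insert, Finset.filter_insert]
    by_cases hc : Spans ends A e
    · rw [numComponents_insert_of_spans (hc.mono Finset.subset_union_left), if_neg (not_not.2 hc)]
      exact ih
    · have := numComponents_le_insert (ends := ends) (A ∪ D) e
      rw [if_pos hc, Finset.card_insert_of_notMem fun h => he (Finset.mem_filter.mp h).1]
      omega

theorem numComponents_le_union_add_card [Finite V] (A D : Finset E) :
    numComponents ends A ≤ numComponents ends (A ∪ D) + D.card :=
  (numComponents_le_union_add_card_filter A D).trans
    (Nat.add_le_add_left (Finset.card_filter_le _ _) _)

theorem card_le_numComponents_add_card [Fintype V] (S : Finset E) :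
    Fintype.card V ≤ numComponents ends S + S.card := by
  simpa [numComponents_empty] using numComponents_le_union_add_card (ends := ends) ∅ S

end Components

section Forest

open scoped Classical

variable [Fintype V] {ends : E → V × V} {F S : Finset E} {e x y : E}

variable (ends) in
def IsForest (S : Finset E) : Prop := numComponents ends S + S.card = Fintype.card V

theorem isForest_empty : IsForest ends (∅ : Finset E) := by
  simp [IsForest, numComponents_empty]

theorem IsForest.of_reach_iff (hF : IsForest ends F)
    (hreach : ∀ a b, Reach ends S a b ↔ Reach ends F a b) (hcard : S.card = F.card) :
    IsForest ends S := by
  rwa [IsForest, numComponents_congr hreach, hcard]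

theorem IsForest.subset [DecidableEq E] (hF : IsForest ends F) (hS : S ⊆ F) : IsForest ends S := by
  have h1 := numComponents_le_union_add_card (ends := ends) S (F \ S)
  rw [Finset.union_sdiff_of_subset hS, Finset.card_sdiff_of_subset hS] at h1
  have h2 := card_le_numComponents_add_card (ends := ends) S
  have h3 := Finset.card_le_card hS
  unfold IsForest at hF ⊢
  omega

theorem IsForest.card_lt [Nonempty V] (hF : IsForest ends F) : F.card < Fintype.card V := by
  have := numComponents_pos (ends := ends) F
  unfold IsForest at hF
  omega

theorem IsForest.not_spans_erase [DecidableEq E] (hF : IsForest ends F) (hy : y ∈ F) :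
    ¬ Spans ends (F.erase y) y := by
  intro hc
  have h1 := numComponents_insert_of_spans hc
  rw [Finset.insert_erase hy] at h1
  have h2 := hF.subset (Finset.erase_subset y F)
  have h3 := Finset.card_erase_add_one hy
  unfold IsForest at hF h2
  omega

theorem IsForest.insert_of_not_spans [DecidableEq E] (hF : IsForest ends F) (he : e ∉ F)
    (hc : ¬ Spans ends F e) : IsForest ends (insert e F) := by
  have := numComponents_insert_of_not_spans hc
  unfold IsForest at hF ⊢
  rw [Finset.card_insert_of_notMem he]
  omega

theorem IsForest.reach_filter_separating [DecidableEq E] (hF : IsForest ends F) {u v : V}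
    (h : Reach ends F u v) :
    Reach ends (F.filter fun y => ¬ Reach ends (F.erase y) u v) u v := by
  induction F using Finset.strongInductionOn with
  | _ F ih =>
  by_cases hall : ∀ y ∈ F, ¬ Reach ends (F.erase y) u v
  · rwa [Finset.filter_true_of_mem hall]
  simp only [not_forall, not_not] at hall
  obtain ⟨y, hyF, hyc⟩ := hall
  refine (ih _ (Finset.erase_ssubset hyF) (hF.subset (Finset.erase_subset _ _)) hyc).mono ?_
  intro y' hy'
  rw [Finset.mem_filter] at hy' ⊢
  obtain ⟨hy'F, hy'c⟩ := hy'
  obtain ⟨hy'y, hy'F⟩ := Finset.mem_erase.mp hy'F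
  refine ⟨hy'F, fun hcon => hF.not_spans_erase hyF ?_⟩
  have hins : insert y ((F.erase y).erase y') = F.erase y' := by
    rw [Finset.erase_right_comm, Finset.insert_erase (Finset.mem_erase.mpr ⟨Ne.symm hy'y, hyF⟩)]
  exact spans_of_reach_insert (Finset.erase_subset _ _) hy'c (by rwa [hins]) hyc

theorem IsForest.isSpanningTree [Nonempty V] (hF : IsForest ends F)
    (hcard : F.card + 1 = Fintype.card V) : IsSpanningTree ends F := by
  refine ⟨mconnected_iff_numComponents_eq_one.mpr ?_, hcard⟩
  unfold IsForest at hF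
  omega

theorem TreeConnected.nonempty {M : ℕ} (hS : TreeConnected ends M S) (hM : 0 < M) :
    Nonempty V := by
  obtain ⟨T, hT, -⟩ := hS
  exact Fintype.card_pos_iff.mp (by have := (hT ⟨0, hM⟩).2.2; omega)

end Forest

section Exchange

variable [DecidableEq E] {ends : E → V × V} {ι : Type*}

theorem reach_insert_erase_iff {F : Finset E} {x y : E} (hy : y ∈ F) (hx : Spans ends F x)
    (hxy : ¬ Spans ends (F.erase y) x) {a b : V} :
    Reach ends (insert x (F.erase y)) a b ↔ Reach ends F a b := by
  have hxins : Spans ends (insert x (F.erase y)) x := spans_of_mem (Finset.mem_insert_self _ _)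
  refine reach_iff_of_forall_spans (fun f hf => ?_) (fun f hf => ?_)
  · rcases Finset.mem_insert.mp hf with rfl | hf
    exacts [hx, spans_of_mem (Finset.mem_of_mem_erase hf)]
  · by_cases hfy : f = y
    · subst hfy
      exact spans_of_reach_insert (Finset.subset_insert _ _) hxy
        (by rwa [Finset.insert_erase hy]) hxins
    · exact spans_of_mem (Finset.mem_insert_of_mem (Finset.mem_erase.mpr ⟨hfy, hf⟩))

/-- Performed in the order of `J`, each exchange `y j ↦ x j` stays valid after the earlier ones. -/
theorem reach_sdiff_union_iff [LinearOrder ι] (J : Finset ι) (x y : ι → E) {F : Finset E}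
    (hx : ∀ j ∈ J, x j ∉ F) (hy : ∀ j ∈ J, y j ∈ F)
    (hxinj : Set.InjOn x J) (hyinj : Set.InjOn y J)
    (hswap : ∀ j ∈ J, Spans ends F (x j) ∧ ¬ Spans ends (F.erase (y j)) (x j))
    (hlater : ∀ j ∈ J, ∀ j' ∈ J, j < j' → Spans ends (F.erase (y j')) (x j)) {a b : V} :
    Reach ends ((F \ J.image y) ∪ J.image x) a b ↔ Reach ends F a b := by
  induction J using Finset.induction_on_min generalizing F with
  | empty => simp
  | insert p J hpJ ih =>
    have hpJ' : p ∉ J := fun h => lt_irrefl p (hpJ p h)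
    have mem : ∀ q ∈ J, q ∈ insert p J := fun q hq => Finset.mem_insert_of_mem hq
    have self : p ∈ insert p J := Finset.mem_insert_self p J
    set F₁ := insert (x p) (F.erase (y p))
    have hF₁ : ∀ {a b}, Reach ends F₁ a b ↔ Reach ends F a b :=
      reach_insert_erase_iff (hy p self) (hswap p self).1 (hswap p self).2
    have hq1 : ∀ q ∈ J, x q ≠ x p := fun q hq h => (ne_of_lt (hpJ q hq)).symm
      (hxinj (mem q hq) self h)
    have hq2 : ∀ q ∈ J, y q ≠ y p := fun q hq h => (ne_of_lt (hpJ q hq)).symm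
      (hyinj (mem q hq) self h)
    have hF₁erase : ∀ q ∈ J, F₁.erase (y q) = insert (x p) ((F.erase (y p)).erase (y q)) :=
      fun q hq => Finset.erase_insert_of_ne fun h => hx p self (h ▸ hy q (mem q hq))
    have hF₁erase_le : ∀ q ∈ J, ∀ e ∈ F₁.erase (y q), Spans ends (F.erase (y q)) e := by
      intro q hq e he
      rw [hF₁erase q hq, Finset.erase_right_comm] at he
      rcases Finset.mem_insert.mp he with rfl | he
      exacts [hlater p self q (mem q hq) (hpJ q hq), spans_of_mem (Finset.mem_of_mem_erase he)]
    have hF₁erase_ge : ∀ r ∈ J, ∀ e ∈ F.erase (y r), Spans ends (F₁.erase (y r)) e := by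
      intro r hr e he
      rw [hF₁erase r hr]
      by_cases hep : e = y p
      · subst hep
        refine spans_of_reach_insert (Finset.subset_insert _ _)
          (fun h => (hswap p self).2 (h.mono (Finset.erase_subset _ _))) ?_
          (spans_of_mem (Finset.mem_insert_self _ _))
        rw [Finset.erase_right_comm, Finset.insert_erase (Finset.mem_erase.mpr
          ⟨(hq2 r hr).symm, hy p self⟩)]
        exact hlater p self r (mem r hr) (hpJ r hr)
      · exact spans_of_mem (Finset.mem_insert_of_mem (by
          rw [Finset.erase_right_comm]; exact Finset.mem_erase.mpr ⟨hep, he⟩))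
    have hJ := @ih F₁
      (fun q hq h => by
        rcases Finset.mem_insert.mp h with h | h
        exacts [hq1 q hq h, hx q (mem q hq) (Finset.mem_of_mem_erase h)])
      (fun q hq => Finset.mem_insert_of_mem (Finset.mem_erase.mpr ⟨hq2 q hq, hy q (mem q hq)⟩))
      (hxinj.mono (Finset.coe_subset.mpr (Finset.subset_insert p J)))
      (hyinj.mono (Finset.coe_subset.mpr (Finset.subset_insert p J)))
      (fun q hq => ⟨hF₁.mpr (hswap q (mem q hq)).1,
        fun h => (hswap q (mem q hq)).2 (h.of_forall_spans (hF₁erase_le q hq))⟩)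
      (fun q hq r hr hqr => (hlater q (mem q hq) r (mem r hr) hqr).of_forall_spans
        (hF₁erase_ge r hr))
    have hset :
        (F₁ \ J.image y) ∪ J.image x = (F \ (insert p J).image y) ∪ (insert p J).image x := by
      have hp1 : x p ∉ J.image y := fun h => by
        obtain ⟨q, hq, hqp⟩ := Finset.mem_image.mp h
        exact hx p self (hqp ▸ hy q (mem q hq))
      ext z
      simp only [F₁, Finset.mem_union, Finset.mem_sdiff, Finset.mem_insert, Finset.mem_erase,
        Finset.image_insert]
      constructor
      · rintro (⟨rfl | h, h'⟩ | h) <;> tauto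
      · rintro (⟨h, h'⟩ | rfl | h) <;> tauto
    rw [← hset]
    exact hJ.trans hF₁

theorem card_sdiff_union_image (J : Finset ι) (x y : ι → E) {F : Finset E}
    (hx : ∀ j ∈ J, x j ∉ F) (hy : ∀ j ∈ J, y j ∈ F)
    (hxinj : Set.InjOn x J) (hyinj : Set.InjOn y J) :
    ((F \ J.image y) ∪ J.image x).card = F.card := by
  have hdisj : Disjoint (F \ J.image y) (J.image x) := by
    refine Finset.disjoint_left.mpr fun e he hx' => ?_
    obtain ⟨j, hj, rfl⟩ := Finset.mem_image.mp hx'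
    exact hx j hj (Finset.mem_sdiff.mp he).1
  have hsub : J.image y ⊆ F := Finset.image_subset_iff.mpr hy
  rw [Finset.card_union_of_disjoint hdisj, Finset.card_sdiff_of_subset hsub,
    Finset.card_image_of_injOn hxinj, Finset.card_image_of_injOn hyinj]
  have := Finset.card_le_card hsub
  rw [Finset.card_image_of_injOn hyinj] at this
  omega

end Exchange

section ShortestPath

variable {α : Type*} {r : α → α → Prop} {p q : α → Prop}

def IsPathFun (r : α → α → Prop) (p q : α → Prop) (n : ℕ) (f : ℕ → α) : Prop :=
  0 < n ∧ p (f 0) ∧ q (f (n - 1)) ∧ ∀ j, j + 1 < n → r (f j) (f (j + 1))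

theorem exists_isPathFun {s z : α} (hs : p s) (hz : q z) (h : Relation.ReflTransGen r s z) :
    ∃ n f, IsPathFun r p q n f := by
  suffices ∃ n f, IsPathFun r (· = s) (· = z) n f by
    obtain ⟨n, f, hn, h0, hlast, hchain⟩ := this
    exact ⟨n, f, hn, h0 ▸ hs, hlast ▸ hz, hchain⟩
  clear hs hz
  induction h with
  | refl => exact ⟨1, fun _ => s, one_pos, rfl, rfl, fun j hj => by omega⟩
  | @tail b c _ hbc ih =>
    obtain ⟨n, f, hn, h0, hlast, hchain⟩ := ih
    refine ⟨n + 1, fun j => if j < n then f j else c, by omega, by simpa [hn] using h0,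
      by simp, fun j hj => ?_⟩
    by_cases hj' : j + 1 < n
    · simpa [hj', show j < n by omega] using hchain j hj'
    · obtain rfl : j = n - 1 := by omega
      simpa [show n - 1 < n by omega, show ¬ (n - 1 + 1 < n) by omega, hlast] using hbc

theorem IsPathFun.skip {n : ℕ} {f : ℕ → α} (hf : IsPathFun r p q n f) {a d : ℕ}
    (had : a + d < n) (hlink : a + d + 1 < n → r (f a) (f (a + d + 1)))
    (hend : a + d + 1 = n → q (f a)) :
    IsPathFun r p q (n - d) fun k => if k ≤ a then f k else f (k + d) := by
  obtain ⟨hn, h0, hlast, hchain⟩ := hf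
  refine ⟨by omega, by simpa using h0, ?_, fun k hk => ?_⟩
  · by_cases h : n - d - 1 ≤ a
    · simpa [h, show n - d - 1 = a by omega] using hend (by omega)
    · simpa [h, show n - d - 1 + d = n - 1 by omega] using hlast
  · rcases lt_trichotomy k a with hka | rfl | hka
    · simpa [hka.le, show k + 1 ≤ a by omega] using hchain k (by omega)
    · simpa [show k + d + 1 = k + 1 + d by omega] using hlink (by omega)
    · simpa [show ¬ k ≤ a by omega, show ¬ k + 1 ≤ a by omega,
        show k + 1 + d = k + d + 1 by omega] using hchain (k + d) (by omega)

theorem exists_shortcutFree_isPathFun {s z : α} (hs : p s) (hz : q z)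
    (h : Relation.ReflTransGen r s z) :
    ∃ n f, IsPathFun r p q n f ∧ (∀ i j, i < j → j < n → f i ≠ f j) ∧
      ∀ i j, i + 1 < j → j < n → ¬ r (f i) (f j) := by
  classical
  have hex : ∃ n f, IsPathFun r p q n f := exists_isPathFun hs hz h
  -- A shortest path: skipping a repetition or a shortcut would give a shorter one.
  obtain ⟨f, hf⟩ := Nat.find_spec hex
  have hmin : ∀ m g, IsPathFun r p q m g → Nat.find hex ≤ m := fun m g hg =>
    Nat.find_min' hex ⟨g, hg⟩
  refine ⟨Nat.find hex, f, hf, fun i j hij hj hfij => ?_, fun i j hij hj hr => ?_⟩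
  · have := hmin _ _ (hf.skip (a := i) (d := j - i) (by omega)
      (fun h => by
        simpa [show i + (j - i) + 1 = j + 1 by omega, hfij] using hf.2.2.2 j (by omega))
      (fun h => by simpa [show j = Nat.find hex - 1 by omega, hfij] using hf.2.2.1))
    omega
  · have := hmin _ _ (hf.skip (a := i) (d := j - i - 1) (by omega)
      (fun _ => by simpa [show i + (j - i - 1) + 1 = j by omega] using hr) (fun _ => by omega))
    omega

end ShortestPath

section Augment

variable {ends : E → V × V} {k : ℕ} {Allow F : Fin k → Finset E}

variable (ends) in
def IsForestPacking [Fintype V] (Allow F : Fin k → Finset E) : Prop :=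
  (∀ i, F i ⊆ Allow i) ∧ (∀ i, IsForest ends (F i)) ∧ ∀ i j, i ≠ j → Disjoint (F i) (F j)

theorem IsForestPacking.eq_of_mem [Fintype V] (hF : IsForestPacking ends Allow F) {i i' : Fin k}
    {e : E} (he : e ∈ F i) (he' : e ∈ F i') : i = i' :=
  by_contra fun h => Finset.disjoint_left.mp (hF.2.2 i i' h) he he'

variable [DecidableEq E]

variable (ends) in
/-- The arcs of Edmonds' exchange graph. -/
def CanReplace (Allow F : Fin k → Finset E) (x y : E) : Prop :=
  ∃ i, y ∈ F i ∧ x ∈ Allow i ∧ x ∉ F i ∧ Spans ends (F i) x ∧ ¬ Spans ends ((F i).erase y) x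

variable (ends) in
def CanAdd (Allow F : Fin k → Finset E) (x : E) : Prop :=
  ∃ i, x ∈ Allow i ∧ x ∉ F i ∧ ¬ Spans ends (F i) x

variable (ends) in
def IsAugmentingPath (Allow F : Fin k → Finset E) (n : ℕ) (f : ℕ → E) : Prop :=
  IsPathFun (CanReplace ends Allow F) (fun s => ∀ i, s ∉ F i) (CanAdd ends Allow F) n f ∧
    (∀ i j, i < j → j < n → f i ≠ f j) ∧
    ∀ i j, i + 1 < j → j < n → ¬ CanReplace ends Allow F (f i) (f j)

/-- The positions `j` of the path where `f j` replaces `f (j + 1)` in forest `i`. -/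
def pathSlot (F : Fin k → Finset E) (n : ℕ) (f : ℕ → E) (i : Fin k) : Finset ℕ :=
  (Finset.range (n - 1)).filter fun j => f (j + 1) ∈ F i

def exchangeAlong (F : Fin k → Finset E) (n : ℕ) (f : ℕ → E) (i : Fin k) : Finset E :=
  (F i \ (pathSlot F n f i).image (fun j => f (j + 1))) ∪ (pathSlot F n f i).image f

variable {n : ℕ} {f : ℕ → E}

theorem mem_pathSlot {i : Fin k} {j : ℕ} :
    j ∈ pathSlot F n f i ↔ j + 1 < n ∧ f (j + 1) ∈ F i := by
  simp [pathSlot, Nat.lt_sub_iff_add_lt]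

theorem mem_exchangeAlong {i : Fin k} {e : E} : e ∈ exchangeAlong F n f i ↔
    (e ∈ F i ∧ e ∉ (pathSlot F n f i).image (fun j => f (j + 1))) ∨
      ∃ j ∈ pathSlot F n f i, f j = e := by
  simp [exchangeAlong]

theorem IsAugmentingPath.mem_image_of_mem (hP : IsAugmentingPath ends Allow F n f) {i : Fin k}
    {j : ℕ} (hj : j < n) (hfj : f j ∈ F i) :
    f j ∈ (pathSlot F n f i).image (fun j => f (j + 1)) := by
  obtain _ | j := j
  · exact absurd hfj (hP.1.2.1 i)
  · exact Finset.mem_image.mpr ⟨j, mem_pathSlot.mpr ⟨hj, hfj⟩, rfl⟩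

theorem IsAugmentingPath.last_not_mem_exchangeAlong (hP : IsAugmentingPath ends Allow F n f)
    (i : Fin k) : f (n - 1) ∉ exchangeAlong F n f i := by
  have hn := hP.1.1
  rw [mem_exchangeAlong]
  rintro (⟨he, hne⟩ | ⟨j, hj, hjn⟩)
  · exact hne (hP.mem_image_of_mem (by omega) he)
  · exact hP.2.1 j (n - 1) (by have := mem_pathSlot.mp hj; omega) (by omega) hjn

variable [Fintype V]

theorem IsForestPacking.canReplace_iff (hF : IsForestPacking ends Allow F) {x y : E} {i : Fin k}
    (hy : y ∈ F i) : CanReplace ends Allow F x y ↔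
      x ∈ Allow i ∧ x ∉ F i ∧ Spans ends (F i) x ∧ ¬ Spans ends ((F i).erase y) x := by
  refine ⟨fun ⟨i', hy', h⟩ => ?_, fun h => ⟨i, hy, h⟩⟩
  obtain rfl := hF.eq_of_mem hy' hy
  exact h

theorem IsForestPacking.update_insert (hF : IsForestPacking ends Allow F) {z : E} {i : Fin k}
    (hzF : ∀ j, z ∉ F j) (hzA : z ∈ Allow i) (hz : ¬ Spans ends (F i) z) :
    IsForestPacking ends Allow (Function.update F i (insert z (F i))) ∧
      ∑ j, (Function.update F i (insert z (F i)) j).card = ∑ j, (F j).card + 1 := by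
  obtain ⟨hA, hforest, hdisj⟩ := hF
  set F' := Function.update F i (insert z (F i))
  have hF' : ∀ j, F' j = if j = i then insert z (F j) else F j := fun j => by
    rcases eq_or_ne j i with rfl | hj <;> simp [F', *]
  refine ⟨⟨fun j => ?_, fun j => ?_, fun j j' hjj' => ?_⟩, ?_⟩
  · rw [hF']; split_ifs with hj
    exacts [Finset.insert_subset (hj ▸ hzA) (hA j), hA j]
  · rw [hF']; split_ifs with hj
    exacts [(hforest j).insert_of_not_spans (hzF j) (hj ▸ hz), hforest j]
  · rw [hF', hF']
    split_ifs with hj hj' hj'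
    · exact absurd (hj.trans hj'.symm) hjj'
    · simpa [hzF j'] using hdisj j j' hjj'
    · simpa [hzF j] using hdisj j j' hjj'
    · exact hdisj j j' hjj'
  · simp only [hF', apply_ite Finset.card, Finset.card_insert_of_notMem (hzF _)]
    rw [Finset.sum_ite, Finset.filter_eq', if_pos (Finset.mem_univ i), Finset.sum_singleton,
      Finset.filter_ne', ← Finset.add_sum_erase _ _ (Finset.mem_univ i)]
    ring

theorem IsAugmentingPath.slot (hF : IsForestPacking ends Allow F)
    (hP : IsAugmentingPath ends Allow F n f) {i : Fin k} {j : ℕ} (hj : j ∈ pathSlot F n f i) :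
    f j ∈ Allow i ∧ f j ∉ F i ∧ Spans ends (F i) (f j) ∧
      ¬ Spans ends ((F i).erase (f (j + 1))) (f j) := by
  rw [mem_pathSlot] at hj
  exact (hF.canReplace_iff hj.2).mp (hP.1.2.2.2 j hj.1)

theorem IsAugmentingPath.exchangeAlong_reach_iff_and_card (hF : IsForestPacking ends Allow F)
    (hP : IsAugmentingPath ends Allow F n f) (i : Fin k) :
    (∀ a b, Reach ends (exchangeAlong F n f i) a b ↔ Reach ends (F i) a b) ∧
      (exchangeAlong F n f i).card = (F i).card := by
  have hinj : ∀ d ≤ 1, Set.InjOn (fun j => f (j + d)) (pathSlot F n f i) := by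
    intro d hd j hj j' hj' h
    simp only [Finset.mem_coe, mem_pathSlot] at hj hj'
    by_contra hne
    rcases Nat.lt_or_gt_of_ne hne with hlt | hlt
    · exact hP.2.1 _ _ (by omega) (by omega) h
    · exact hP.2.1 _ _ (by omega) (by omega) h.symm
  have hx : ∀ j ∈ pathSlot F n f i, f j ∉ F i := fun j hj => (hP.slot hF hj).2.1
  have hy : ∀ j ∈ pathSlot F n f i, f (j + 1) ∈ F i := fun j hj => (mem_pathSlot.mp hj).2
  refine ⟨fun a b => reach_sdiff_union_iff _ f (fun j => f (j + 1)) hx hy (hinj 0 zero_le_one)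
    (hinj 1 le_rfl) (fun j hj => (hP.slot hF hj).2.2) (fun j hj j' hj' hjj' => ?_),
    card_sdiff_union_image _ f (fun j => f (j + 1)) hx hy (hinj 0 zero_le_one) (hinj 1 le_rfl)⟩
  by_contra hns
  have hj'' := mem_pathSlot.mp hj'
  obtain ⟨hA, hnF, hspan, -⟩ := hP.slot hF hj
  exact hP.2.2 j (j' + 1) (by omega) hj''.1 ⟨i, hj''.2, hA, hnF, hspan, hns⟩

theorem IsAugmentingPath.isForestPacking_exchangeAlong (hF : IsForestPacking ends Allow F)
    (hP : IsAugmentingPath ends Allow F n f) :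
    IsForestPacking ends Allow (exchangeAlong F n f) := by
  refine ⟨fun i e he => ?_, fun i => ?_, fun i i' hii' => Finset.disjoint_left.mpr ?_⟩
  · rcases mem_exchangeAlong.mp he with ⟨he, -⟩ | ⟨j, hj, rfl⟩
    exacts [hF.1 i he, (hP.slot hF hj).1]
  · obtain ⟨hreach, hcard⟩ := hP.exchangeAlong_reach_iff_and_card hF i
    exact (hF.2.1 i).of_reach_iff hreach hcard
  · intro e he he'
    rcases mem_exchangeAlong.mp he with ⟨he, hne⟩ | ⟨j, hj, rfl⟩ <;>
      rcases mem_exchangeAlong.mp he' with ⟨he', hne'⟩ | ⟨j', hj', hjj'⟩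
    · exact hii' (hF.eq_of_mem he he')
    · subst hjj'
      exact hne (hP.mem_image_of_mem (by have := mem_pathSlot.mp hj'; omega) he)
    · exact hne' (hP.mem_image_of_mem (by have := mem_pathSlot.mp hj; omega) he')
    · have hj₁ := mem_pathSlot.mp hj
      have hj₂ := mem_pathSlot.mp hj'
      obtain rfl : j' = j := by
        by_contra hne
        rcases Nat.lt_or_gt_of_ne hne with hlt | hlt
        · exact hP.2.1 _ _ hlt (by omega) hjj'
        · exact hP.2.1 _ _ hlt (by omega) hjj'.symm
      exact hii' (hF.eq_of_mem hj₁.2 hj₂.2)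

theorem IsForestPacking.augment (hF : IsForestPacking ends Allow F)
    (hP : IsAugmentingPath ends Allow F n f) :
    ∃ F', IsForestPacking ends Allow F' ∧ ∑ i, (F' i).card = ∑ i, (F i).card + 1 := by
  obtain ⟨i, hzA, -, hz⟩ := hP.1.2.2.1
  have hG := hP.isForestPacking_exchangeAlong hF
  have hcard : ∑ j, (exchangeAlong F n f j).card = ∑ j, (F j).card :=
    Finset.sum_congr rfl fun j _ => (hP.exchangeAlong_reach_iff_and_card hF j).2
  obtain ⟨hF', hcard'⟩ := hG.update_insert hP.last_not_mem_exchangeAlong hzA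
    fun h => hz (((hP.exchangeAlong_reach_iff_and_card hF i).1 _ _).mp h)
  exact ⟨_, hF', hcard'.trans (by rw [hcard])⟩

end Augment

section Packing

open scoped Classical

variable [Fintype V] [DecidableEq E] {ends : E → V × V} {k : ℕ} {Allow F : Fin k → Finset E}

/-- An edge of `R` outside `F i` is spanned by `F i`, and it can replace every edge of its
fundamental circuit, so that circuit lies in `R`. -/
theorem IsForestPacking.spans_inter_of_closed (hF : IsForestPacking ends Allow F) {R : Finset E}
    (hclosed : ∀ x ∈ R, ∀ y, CanReplace ends Allow F x y → y ∈ R)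
    (hnoadd : ∀ e ∈ R, ¬ CanAdd ends Allow F e) (i : Fin k) :
    ∀ e ∈ R ∩ Allow i, Spans ends (F i ∩ R) e := by
  intro e he
  obtain ⟨heR, heA⟩ := Finset.mem_inter.mp he
  by_cases heF : e ∈ F i
  · exact spans_of_mem (Finset.mem_inter.mpr ⟨heF, heR⟩)
  have hspan : Spans ends (F i) e := by_contra fun h => hnoadd e heR ⟨i, heA, heF, h⟩
  refine ((hF.2.1 i).reach_filter_separating hspan).mono fun y hy => ?_
  obtain ⟨hyF, hy⟩ := Finset.mem_filter.mp hy
  exact Finset.mem_inter.mpr ⟨hyF, hclosed e heR y ⟨i, hyF, heA, heF, hspan, hy⟩⟩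

/-- When no augmenting path exists, the edges reachable from unused ones form such an `R`,
and this inequality contradicts the packing condition for `A = R`. -/
theorem IsForestPacking.le_of_closed [Nonempty V] (hF : IsForestPacking ends Allow F)
    {R : Finset E} (hunused : ∀ e ∈ Finset.univ.biUnion Allow, (∀ i, e ∉ F i) → e ∈ R)
    (hclosed : ∀ x ∈ R, ∀ y, CanReplace ends Allow F x y → y ∈ R)
    (hnoadd : ∀ e ∈ R, ¬ CanAdd ends Allow F e) :
    k * (Fintype.card V - 1) + ((Finset.univ.biUnion Allow) \ R).card ≤
      ∑ i, (numComponents ends (R ∩ Allow i) - 1) + ∑ i, (F i).card := by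
  have hslot : ∀ i, Fintype.card V - 1 + (F i \ R).card ≤
      numComponents ends (R ∩ Allow i) - 1 + (F i).card := by
    intro i
    have h1 : numComponents ends (F i ∩ R) ≤ numComponents ends (R ∩ Allow i) :=
      numComponents_le_of_reach fun a b hab =>
        hab.of_forall_spans (hF.spans_inter_of_closed hclosed hnoadd i)
    have h2 : IsForest ends (F i ∩ R) := (hF.2.1 i).subset Finset.inter_subset_left
    have h3 := Finset.card_inter_add_card_sdiff (F i) R
    have h4 := numComponents_pos (ends := ends) (F i ∩ R)
    unfold IsForest at h2
    omega
  have hcover : (Finset.univ.biUnion Allow) \ R ⊆ Finset.univ.biUnion fun i => F i \ R := by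
    intro e he
    obtain ⟨heA, heR⟩ := Finset.mem_sdiff.mp he
    obtain ⟨i, hi⟩ : ∃ i, e ∈ F i := by
      by_contra h
      exact heR (hunused e heA (by simpa using h))
    exact Finset.mem_biUnion.mpr ⟨i, Finset.mem_univ i, Finset.mem_sdiff.mpr ⟨hi, heR⟩⟩
  have hsum := Finset.sum_le_sum fun i (_ : i ∈ Finset.univ) => hslot i
  rw [Finset.sum_add_distrib, Finset.sum_add_distrib, Finset.sum_const, Finset.card_univ,
    Fintype.card_fin, smul_eq_mul] at hsum
  have := (Finset.card_le_card hcover).trans Finset.card_biUnion_le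
  omega

theorem IsForestPacking.exists_augment [Nonempty V] (hF : IsForestPacking ends Allow F)
    (hC : ∀ A : Finset E, ∑ i, (numComponents ends (A ∩ Allow i) - 1) ≤
      ((Finset.univ.biUnion Allow) \ A).card)
    (hlt : ∑ i, (F i).card < k * (Fintype.card V - 1)) :
    ∃ F', IsForestPacking ends Allow F' ∧ ∑ i, (F' i).card = ∑ i, (F i).card + 1 := by
  let Unused : E → Prop := fun s => s ∈ Finset.univ.biUnion Allow ∧ ∀ i, s ∉ F i
  by_cases hpath : ∃ s z, Unused s ∧ CanAdd ends Allow F z ∧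
      Relation.ReflTransGen (CanReplace ends Allow F) s z
  · obtain ⟨s, z, hs, hz, hsz⟩ := hpath
    obtain ⟨n, f, hf, hinj, hshort⟩ :=
      exists_shortcutFree_isPathFun (p := fun s => ∀ i, s ∉ F i) hs.2 hz hsz
    exact hF.augment ⟨hf, hinj, hshort⟩
  · simp only [not_exists, not_and] at hpath
    set R := (Finset.univ.biUnion Allow).filter fun e => ∃ s, Unused s ∧
      Relation.ReflTransGen (CanReplace ends Allow F) s e
    have := hF.le_of_closed (R := R)
      (fun e he hunused => Finset.mem_filter.mpr ⟨he, e, ⟨he, hunused⟩, .refl⟩)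
      (fun x hx y hxy => by
        obtain ⟨-, s, hs, hsx⟩ := Finset.mem_filter.mp hx
        obtain ⟨i, hy, -⟩ := id hxy
        exact Finset.mem_filter.mpr ⟨Finset.mem_biUnion.mpr ⟨i, Finset.mem_univ i, hF.1 i hy⟩,
          s, hs, hsx.tail hxy⟩)
      (fun e he => by
        obtain ⟨-, s, hs, hse⟩ := Finset.mem_filter.mp he
        exact fun h => hpath s e hs h hse)
    have := hC R
    omega

/-- Edmonds' matroid partition theorem for cycle matroids. -/
theorem exists_spanningTree_packing [Nonempty V]
    (hC : ∀ A : Finset E, ∑ i, (numComponents ends (A ∩ Allow i) - 1) ≤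
      ((Finset.univ.biUnion Allow) \ A).card) :
    ∃ T : Fin k → Finset E, (∀ i, T i ⊆ Allow i ∧ IsSpanningTree ends (T i)) ∧
      ∀ i j, i ≠ j → Disjoint (T i) (T j) := by
  suffices ∀ d F, IsForestPacking ends Allow F → ∑ i, (F i).card + d = k * (Fintype.card V - 1) →
      ∃ T : Fin k → Finset E, (∀ i, T i ⊆ Allow i ∧ IsSpanningTree ends (T i)) ∧
        ∀ i j, i ≠ j → Disjoint (T i) (T j) from
    this (k * (Fintype.card V - 1)) (fun _ => ∅) ⟨fun _ => Finset.empty_subset _,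
      fun _ => isForest_empty, fun _ _ _ => Finset.disjoint_empty_left _⟩ (by simp)
  intro d
  induction d with
  | zero =>
    intro F hF hsum
    have hle : ∀ i ∈ Finset.univ, (F i).card ≤ Fintype.card V - 1 := fun i _ => by
      have := (hF.2.1 i).card_lt; omega
    have heq := (Finset.sum_eq_sum_iff_of_le hle).mp (by simpa using hsum)
    refine ⟨F, fun i => ⟨hF.1 i, (hF.2.1 i).isSpanningTree ?_⟩, hF.2.2⟩
    have := heq i (Finset.mem_univ i); have := (hF.2.1 i).card_lt; omega
  | succ d ih =>
    intro F hF hsum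
    obtain ⟨F', hF', hcard⟩ := hF.exists_augment hC (by omega)
    exact ih F' hF' (by omega)

end Packing

section Cuts

variable [DecidableEq V] {ends : E → V × V}

variable (ends) in
def Crosses (X : Finset V) (e : E) : Prop := ¬((ends e).1 ∈ X ↔ (ends e).2 ∈ X)

instance (X : Finset V) : DecidablePred (Crosses ends X) := fun e =>
  inferInstanceAs (Decidable ¬((ends e).1 ∈ X ↔ (ends e).2 ∈ X))

theorem cutEdges_eq_filter_crosses (S : Finset E) (X : Finset V) :
    cutEdges ends S X = S.filter (Crosses ends X) := rfl

theorem crosses_symmDiff {X W : Finset V} {e : E} :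
    Crosses ends (symmDiff X W) e ↔ (Crosses ends X e ↔ ¬ Crosses ends W e) := by
  simp only [Crosses, Finset.mem_symmDiff]
  tauto

/-- Otherwise moving the vertices of `W` to the other side of `X` would enlarge the cut. -/
theorem card_filter_not_crosses_le_of_max (S : Finset E) {X : Finset V}
    (hmax : ∀ Y, (cutEdges ends S Y).card ≤ (cutEdges ends S X).card) (W : Finset V) :
    (S.filter fun e => ¬ Crosses ends X e ∧ Crosses ends W e).card ≤
      (S.filter fun e => Crosses ends X e ∧ Crosses ends W e).card := by
  have hflip : (cutEdges ends S (symmDiff X W)).card +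
      (S.filter fun e => Crosses ends X e ∧ Crosses ends W e).card =
      (cutEdges ends S X).card +
        (S.filter fun e => ¬ Crosses ends X e ∧ Crosses ends W e).card := by
    simp only [cutEdges_eq_filter_crosses, Finset.card_filter, ← Finset.sum_add_distrib]
    refine Finset.sum_congr rfl fun e _ => ?_
    have := crosses_symmDiff (ends := ends) (X := X) (W := W) (e := e)
    unfold Crosses at this ⊢
    by_cases hX : ((ends e).1 ∈ X ↔ (ends e).2 ∈ X) <;>
      by_cases hW : ((ends e).1 ∈ W ↔ (ends e).2 ∈ W) <;> simp_all
  have := hmax (symmDiff X W)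
  omega

theorem biIndex_le_card_filter_not_crosses [DecidableEq E] (S : Finset E) (X : Finset V) :
    biIndex ends S ≤ (S.filter fun e => ¬ Crosses ends X e).card := by
  refine Nat.sInf_le ⟨cutEdges ends S X, Finset.filter_subset _ _,
    ⟨X, fun e he => (Finset.mem_filter.mp he).2⟩, ?_⟩
  rw [cutEdges_eq_filter_crosses, Finset.filter_not]

variable [Fintype V]

theorem eIn_add_eIn_compl (S : Finset E) (X : Finset V) :
    eIn ends S X + eIn ends S Xᶜ = (S.filter fun e => ¬ Crosses ends X e).card := by
  classical
  rw [eIn, eIn, ← Finset.card_union_of_disjoint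
    (Finset.disjoint_filter.mpr fun e _ h h' => by simp_all), ← Finset.filter_or]
  congr 1
  refine Finset.filter_congr fun e _ => ?_
  simp only [Crosses, Finset.mem_compl]
  tauto

/-- An edge joining two different classes of `c` crosses exactly two of the classes. -/
theorem sum_card_filter_crosses_fiber {Q : Type*} [Fintype Q] [DecidableEq Q] (c : V → Q)
    (S : Finset E) :
    ∑ q, (S.filter fun e => Crosses ends (Finset.univ.filter fun v => c v = q) e).card =
      2 * (S.filter fun e => c (ends e).1 ≠ c (ends e).2).card := by
  simp only [Finset.card_filter, Finset.mul_sum]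
  rw [Finset.sum_comm]
  refine Finset.sum_congr rfl fun e _ => ?_
  simp only [Crosses, Finset.mem_filter, Finset.mem_univ, true_and]
  split_ifs with h
  · rw [← Finset.card_filter, show (Finset.univ.filter fun q =>
      ¬(c (ends e).1 = q ↔ c (ends e).2 = q)) = {c (ends e).1, c (ends e).2} by ext q; simp; grind]
    simp [h]
  · simp [not_not.mp h]

/-- Sum `card_filter_not_crosses_le_of_max` over the classes of `c`. -/
theorem card_filter_ne_le_two_mul_of_max {Q : Type*} [Fintype Q] [DecidableEq Q] (c : V → Q)
    (S : Finset E) {X : Finset V}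
    (hmax : ∀ Y, (cutEdges ends S Y).card ≤ (cutEdges ends S X).card) :
    (S.filter fun e => c (ends e).1 ≠ c (ends e).2).card ≤
      2 * ((cutEdges ends S X).filter fun e => c (ends e).1 ≠ c (ends e).2).card := by
  classical
  have hsum := Finset.sum_le_sum fun q (_ : q ∈ Finset.univ) =>
    card_filter_not_crosses_le_of_max S hmax (Finset.univ.filter fun v => c v = q)
  have h1 := sum_card_filter_crosses_fiber (ends := ends) c (S.filter fun e => ¬ Crosses ends X e)
  have h2 := sum_card_filter_crosses_fiber (ends := ends) c (cutEdges ends S X)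
  have hsplit : (S.filter fun e => c (ends e).1 ≠ c (ends e).2).card =
      (S.filter fun e => ¬ Crosses ends X e ∧ c (ends e).1 ≠ c (ends e).2).card +
      (S.filter fun e => Crosses ends X e ∧ c (ends e).1 ≠ c (ends e).2).card := by
    rw [← Finset.card_union_of_disjoint (Finset.disjoint_filter.mpr fun _ _ h h' => h.1 h'.1),
      ← Finset.filter_or]
    congr 1
    exact Finset.filter_congr fun e _ => by by_cases h : Crosses ends X e <;> simp [h]
  simp only [cutEdges_eq_filter_crosses, Finset.filter_filter] at h1 h2 hsum ⊢
  omega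

end Cuts

section TreeCounting

open scoped Classical

variable [Fintype V] [Nonempty V] [DecidableEq E] {ends : E → V × V} {M : ℕ} {S : Finset E}

/-- Each of the `M` spanning trees has at least `c(A) - 1` edges joining different components
of `A`. -/
theorem TreeConnected.mul_le_card_filter_not_spans (hS : TreeConnected ends M S)
    (A : Finset E) :
    M * (numComponents ends A - 1) ≤ (S.filter fun e => ¬ Spans ends A e).card := by
  obtain ⟨T, hT, hdisj⟩ := hS
  have htree :
      ∀ i, numComponents ends A - 1 ≤ ((T i).filter fun e => ¬ Spans ends A e).card := by
    intro i
    have h1 := numComponents_le_union_add_card_filter (ends := ends) A (T i)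
    have h2 : numComponents ends (A ∪ T i) = 1 :=
      mconnected_iff_numComponents_eq_one.mp fun u v =>
        Reach.mono Finset.subset_union_right ((hT i).2.1 u v)
    omega
  calc M * (numComponents ends A - 1) = ∑ _i : Fin M, (numComponents ends A - 1) := by simp
    _ ≤ ∑ i, ((T i).filter fun e => ¬ Spans ends A e).card := Finset.sum_le_sum fun i _ => htree i
    _ = (Finset.univ.biUnion fun i => (T i).filter fun e => ¬ Spans ends A e).card :=
      (Finset.card_biUnion fun i _ j _ hij => Finset.disjoint_filter_filter (hdisj i j hij)).symm
    _ ≤ _ := Finset.card_le_card fun e he => by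
      obtain ⟨i, -, hi⟩ := Finset.mem_biUnion.mp he
      obtain ⟨heT, he⟩ := Finset.mem_filter.mp hi
      exact Finset.mem_filter.mpr ⟨(hT i).1 heT, he⟩

theorem TreeConnected.mul_le_card_sdiff_add_card (hS : TreeConnected ends M S)
    (N A : Finset E) :
    M * (numComponents ends (A ∩ (S \ N)) - 1) ≤ ((S \ N) \ A).card + N.card := by
  refine (hS.mul_le_card_filter_not_spans _).trans <|
    (Finset.card_le_card fun e he => ?_).trans (Finset.card_union_le _ _)
  obtain ⟨heS, he⟩ := Finset.mem_filter.mp he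
  by_cases heN : e ∈ N
  · exact Finset.mem_union_right _ heN
  · have heSN : e ∈ S \ N := Finset.mem_sdiff.mpr ⟨heS, heN⟩
    exact Finset.mem_union_left _ (Finset.mem_sdiff.mpr ⟨heSN,
      fun heA => he (spans_of_mem (Finset.mem_inter.mpr ⟨heA, heSN⟩))⟩)

variable [DecidableEq V]

theorem TreeConnected.mul_le_two_mul_card_cutEdges_sdiff (hS : TreeConnected ends M S)
    {X : Finset V} (hmax : ∀ Y, (cutEdges ends S Y).card ≤ (cutEdges ends S X).card)
    (A : Finset E) :
    M * (numComponents ends (A ∩ cutEdges ends S X) - 1) ≤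
      2 * (cutEdges ends S X \ A).card := by
  set A' := A ∩ cutEdges ends S X
  have hspans : ∀ e, Quotient.mk (reachSetoid ends A') (ends e).1 ≠ ⟦(ends e).2⟧ ↔
      ¬ Spans ends A' e := fun e => not_congr Quotient.eq
  have h1 := hS.mul_le_card_filter_not_spans A'
  have h2 := card_filter_ne_le_two_mul_of_max (Quotient.mk (reachSetoid ends A')) S hmax
  simp only [hspans] at h2
  refine h1.trans (h2.trans (Nat.mul_le_mul_left 2 (Finset.card_le_card fun e he => ?_)))
  obtain ⟨heX, he⟩ := Finset.mem_filter.mp he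
  exact Finset.mem_sdiff.mpr
    ⟨heX, fun heA => he (spans_of_mem (Finset.mem_inter.mpr ⟨heA, heX⟩))⟩

end TreeCounting

theorem mul_add_mul_le_of_weighted_bounds {m₁ m₂ p q t a b : ℕ} (ht : t ≤ m₂)
    (ha : (m₁ + 2 * m₂) * q ≤ 2 * a) (hb : (m₁ + 2 * m₂) * p ≤ b + t) (hab : a ≤ b) :
    m₁ * p + m₂ * q ≤ b := by
  rcases le_or_gt (2 * p) q with hpq | hpq
  · nlinarith [Nat.mul_le_mul_left m₁ hpq]
  · nlinarith [Nat.mul_le_mul_left m₂ (show q + 1 ≤ 2 * p by omega)]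

section Decomposition

variable [Fintype V] [DecidableEq V] [Fintype E] [DecidableEq E] {ends : E → V × V}

theorem packing_condition [Nonempty V] {m₁ m₂ : ℕ} (hm₂ : 0 < m₂)
    (hG : TreeConnected ends (m₁ + 2 * m₂) Finset.univ) {X : Finset V}
    (hmax : ∀ Y, (cutEdges ends Finset.univ Y).card ≤ (cutEdges ends Finset.univ X).card)
    {N : Finset E} (hN : N.card ≤ m₂) (hNX : ∀ e ∈ N, ¬ Crosses ends X e) (A : Finset E) :
    let Allow : Fin (m₁ + m₂) → Finset E :=
      Fin.addCases (fun _ => Finset.univ \ N) (fun _ => cutEdges ends Finset.univ X)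
    ∑ i, (numComponents ends (A ∩ Allow i) - 1) ≤ ((Finset.univ.biUnion Allow) \ A).card := by
  intro Allow
  have hcut : cutEdges ends Finset.univ X ⊆ Finset.univ \ N := fun e he =>
    Finset.mem_sdiff.mpr ⟨Finset.mem_univ e, fun heN => hNX e heN (Finset.mem_filter.mp he).2⟩
  have hground : ∀ i, ∀ e ∈ Allow i, e ∈ Finset.univ.biUnion Allow := fun i e he =>
    Finset.mem_biUnion.mpr ⟨i, Finset.mem_univ i, he⟩
  have hsum : ∑ i, (numComponents ends (A ∩ Allow i) - 1) =
      m₁ * (numComponents ends (A ∩ (Finset.univ \ N)) - 1) +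
        m₂ * (numComponents ends (A ∩ cutEdges ends Finset.univ X) - 1) := by
    simp [Fin.sum_univ_add, Allow]
  have ha := hG.mul_le_two_mul_card_cutEdges_sdiff hmax A
  have hb := hG.mul_le_card_sdiff_add_card N A
  have hcutA : (cutEdges ends Finset.univ X \ A).card ≤ ((Finset.univ.biUnion Allow) \ A).card :=
    Finset.card_le_card (Finset.sdiff_subset_sdiff (fun e he =>
      hground (Fin.natAdd m₁ ⟨0, hm₂⟩) e (by simp only [Allow, Fin.addCases_right]; exact he))
      le_rfl)
  rw [hsum]
  rcases Nat.eq_zero_or_pos m₁ with rfl | hm₁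
  · simp only [zero_mul, zero_add, mul_assoc] at ha ⊢
    omega
  · have hSN : ((Finset.univ \ N) \ A).card ≤ ((Finset.univ.biUnion Allow) \ A).card :=
      Finset.card_le_card (Finset.sdiff_subset_sdiff (fun e he =>
        hground (Fin.castAdd m₂ ⟨0, hm₁⟩) e (by simp only [Allow, Fin.addCases_left]; exact he))
        le_rfl)
    exact (mul_add_mul_le_of_weighted_bounds hN ha hb
      (Finset.card_le_card (Finset.sdiff_subset_sdiff hcut le_rfl))).trans hSN

theorem exists_decomposition_of_trees {m₁ m₂ : ℕ} {X : Finset V} {N : Finset E}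
    (hNX : ∀ e ∈ N, ¬ Crosses ends X e) (T : Fin (m₁ + m₂) → Finset E)
    (hT : ∀ i, T i ⊆ Fin.addCases (fun _ => Finset.univ \ N)
      (fun _ => cutEdges ends Finset.univ X) i ∧ IsSpanningTree ends (T i))
    (hdisj : ∀ i j, i ≠ j → Disjoint (T i) (T j)) :
    ∃ G₁ G₂ : Finset E, Disjoint G₁ G₂ ∧ G₁ ∪ G₂ = Finset.univ ∧ TreeConnected ends m₁ G₁ ∧
      TreeConnected ends m₂ (cutEdges ends G₂ X) ∧ eIn ends G₂ X + eIn ends G₂ Xᶜ = N.card := by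
  set B := Finset.univ.biUnion fun j => T (Fin.natAdd m₁ j)
  have hB : ∀ e ∈ B, Crosses ends X e := fun e he => by
    obtain ⟨j, -, hj⟩ := Finset.mem_biUnion.mp he
    have := (hT (Fin.natAdd m₁ j)).1 hj
    rw [Fin.addCases_right] at this
    exact (Finset.mem_filter.mp this).2
  have hcut : cutEdges ends (B ∪ N) X = B := by
    ext e
    simp only [cutEdges_eq_filter_crosses, Finset.mem_filter, Finset.mem_union]
    exact ⟨fun ⟨h, hc⟩ => h.resolve_right fun hN => hNX e hN hc, fun h => ⟨Or.inl h, hB e h⟩⟩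
  have hnoncut : (B ∪ N).filter (fun e => ¬ Crosses ends X e) = N := by
    ext e
    simp only [Finset.mem_filter, Finset.mem_union]
    exact ⟨fun ⟨h, hc⟩ => h.resolve_left fun hB' => hc (hB e hB'), fun h => ⟨Or.inr h, hNX e h⟩⟩
  refine ⟨Finset.univ \ (B ∪ N), B ∪ N, Finset.sdiff_disjoint,
    Finset.sdiff_union_of_subset (Finset.subset_univ _), ⟨fun i => T (Fin.castAdd m₂ i),
      fun i => ⟨fun e he => ?_, (hT _).2⟩,
      fun i j hij => hdisj _ _ fun h => hij (Fin.castAdd_injective _ _ h)⟩, ?_, ?_⟩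
  · have heN := (hT (Fin.castAdd m₂ i)).1 he
    rw [Fin.addCases_left, Finset.mem_sdiff] at heN
    refine Finset.mem_sdiff.mpr ⟨Finset.mem_univ e, fun h => ?_⟩
    rcases Finset.mem_union.mp h with hB' | hN
    · obtain ⟨j, -, hj⟩ := Finset.mem_biUnion.mp hB'
      refine Finset.disjoint_left.mp (hdisj _ _ fun h => ?_) he hj
      have := congrArg Fin.val h
      simp only [Fin.val_castAdd, Fin.val_natAdd] at this
      omega
    · exact heN.2 hN
  · rw [hcut]
    exact ⟨fun j => T (Fin.natAdd m₁ j),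
      fun j => ⟨Finset.subset_biUnion_of_mem (fun j => T (Fin.natAdd m₁ j)) (Finset.mem_univ j),
        (hT _).2⟩,
      fun i j hij => hdisj _ _ fun h => hij (Fin.natAdd_injective _ _ h)⟩
  · rw [eIn_add_eIn_compl, hnoncut]

end Decomposition

/-- Decomposition of an `(m₁+2m₂)`-tree-connected graph into an
`m₁`-tree-connected factor `G₁` and a factor `G₂` whose crossing part `G₂[X, Xᶜ]` is
`m₂`-tree-connected, with exactly `min{k₀, bi(G)}` non-crossing edges in `G₂`. -/
theorem statement_17 [Fintype V] [DecidableEq V] [Fintype E] [DecidableEq E]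
    (ends : E → V × V) (m₁ m₂ k₀ : ℕ) (hk : k₀ ≤ m₂)
    (hG : TreeConnected ends (m₁ + 2 * m₂) (Finset.univ : Finset E)) :
    ∃ G₁ G₂ : Finset E, Disjoint G₁ G₂ ∧ G₁ ∪ G₂ = (Finset.univ : Finset E) ∧
      TreeConnected ends m₁ G₁ ∧
      ∃ X : Finset V,
        TreeConnected ends m₂
          (G₂.filter fun e => ¬(((ends e).1 ∈ X) ↔ ((ends e).2 ∈ X))) ∧
        eIn ends G₂ X + eIn ends G₂ Xᶜ =
          min k₀ (biIndex ends (Finset.univ : Finset E)) := by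
  rcases Nat.eq_zero_or_pos m₂ with rfl | hm₂
  · obtain rfl : k₀ = 0 := Nat.le_zero.mp hk
    exact ⟨Finset.univ, ∅, Finset.disjoint_empty_right _, Finset.union_empty _,
      by simpa using hG, ∅, ⟨Fin.elim0, fun i => i.elim0, fun i => i.elim0⟩, by simp [eIn]⟩
  have := hG.nonempty (by omega)
  obtain ⟨X, -, hmax⟩ := Finset.exists_max_image Finset.univ
    (fun Y => (cutEdges ends Finset.univ Y).card) ⟨∅, Finset.mem_univ _⟩
  obtain ⟨N, hNsub, hNcard⟩ := Finset.exists_subset_card_eq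
    ((min_le_right k₀ _).trans (biIndex_le_card_filter_not_crosses (ends := ends) Finset.univ X))
  have hNX : ∀ e ∈ N, ¬ Crosses ends X e := fun e he => (Finset.mem_filter.mp (hNsub he)).2
  obtain ⟨T, hT, hdisj⟩ := exists_spanningTree_packing (packing_condition hm₂ hG
    (fun Y => hmax Y (Finset.mem_univ Y)) (hNcard ▸ (min_le_left _ _).trans hk) hNX)
  obtain ⟨G₁, G₂, hdisj, hunion, hG₁, hG₂, hcount⟩ :=
    exists_decomposition_of_trees hNX T hT hdisj
  exact ⟨G₁, G₂, hdisj, hunion, hG₁, X, hG₂, hcount.trans hNcard⟩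
end
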